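/- Let 0 < ν < 1 and σ ∈ ℝ, and define R(s) = Γ(1−s/2)Γ((s−ν)/2)/(Γ((s+1−ν)/2)Γ((3−s)/2)) for s ∈ ℂ. Then (σ+it)·R(σ+it) → 2i as t → +∞ and (σ+it)·R(σ+it) → −2i as t → −∞. -/

import Mathlib

open Complex Filter

/-- R(s) = Γ(1−s/2)Γ((s−ν)/2)/(Γ((s+1−ν)/2)Γ((3−s)/2)). -/
noncomputable def Rfun (nu : ℝ) (s : ℂ) : ℂ :=
  Complex.Gamma (1 - s / 2) * Complex.Gamma ((s - (nu : ℂ)) / 2) /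
    (Complex.Gamma ((s + 1 - (nu : ℂ)) / 2) * Complex.Gamma ((3 - s) / 2))

section Aux
open Real


lemma my_Gamma_ne_zero {z : ℂ} (hz : z.im ≠ 0) : Complex.Gamma z ≠ 0 := by
  refine Complex.Gamma_ne_zero fun m h => hz ?_
  rw [h]; simp

lemma my_sin_ne_zero {z : ℂ} (hz : z.im ≠ 0) : Complex.sin z ≠ 0 := by
  intro h
  rw [Complex.sin_eq_zero_iff] at h
  obtain ⟨k, hk⟩ := h
  apply hz; rw [hk]; simp [Complex.ofReal_im]

lemma my_cos_ne_zero {z : ℂ} (hz : z.im ≠ 0) : Complex.cos z ≠ 0 := by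
  intro h
  rw [Complex.cos_eq_zero_iff] at h
  obtain ⟨k, hk⟩ := h
  apply hz; rw [hk]; simp

lemma prod_one_add_sub_one_norm (u : ℕ → ℂ) (n : ℕ) :
    ‖(∏ j ∈ Finset.range n, (1 + u j)) - 1‖ ≤ Real.exp (∑ j ∈ Finset.range n, ‖u j‖) - 1 := by
  induction n with
  | zero => simp
  | succ n ih =>
    rw [Finset.prod_range_succ, Finset.sum_range_succ]
    have h1 : (∏ j ∈ Finset.range n, (1 + u j)) * (1 + u n) - 1
        = ((∏ j ∈ Finset.range n, (1 + u j)) - 1) * (1 + u n) + u n := by ring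
    rw [h1]
    have h2 : ‖(1 : ℂ) + u n‖ ≤ Real.exp ‖u n‖ := by
      calc ‖(1:ℂ) + u n‖ ≤ 1 + ‖u n‖ := by simpa using norm_add_le 1 (u n)
        _ ≤ Real.exp ‖u n‖ := by linarith [Real.add_one_le_exp ‖u n‖]
    have hS : (0:ℝ) ≤ ∑ j ∈ Finset.range n, ‖u j‖ := by positivity
    have hE1 : (1:ℝ) ≤ Real.exp (∑ j ∈ Finset.range n, ‖u j‖) := by
      linarith [Real.add_one_le_exp (∑ j ∈ Finset.range n, ‖u j‖)]
    calc ‖((∏ j ∈ Finset.range n, (1 + u j)) - 1) * (1 + u n) + u n‖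
        ≤ ‖(∏ j ∈ Finset.range n, (1 + u j)) - 1‖ * ‖(1:ℂ) + u n‖ + ‖u n‖ := by
          rw [← norm_mul]; exact norm_add_le _ _
      _ ≤ (Real.exp (∑ j ∈ Finset.range n, ‖u j‖) - 1) * Real.exp ‖u n‖ + ‖u n‖ := by
          have := mul_le_mul ih h2 (norm_nonneg _) (by linarith)
          linarith
      _ ≤ Real.exp (∑ j ∈ Finset.range n, ‖u j‖ + ‖u n‖) - 1 := by
          rw [Real.exp_add]
          have := Real.add_one_le_exp ‖u n‖
          nlinarith [Real.exp_pos (∑ j ∈ Finset.range n, ‖u j‖), norm_nonneg (u n),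
            Real.exp_pos ‖u n‖]

lemma sum_est (C A : ℝ) (hC : 0 ≤ C) (hA : 1 ≤ A) (g : ℕ → ℝ) (hg0 : ∀ j, 0 ≤ g j)
    (h1 : ∀ j, g j ≤ 1 / A ^ 2) (h2 : ∀ j : ℕ, C + A ≤ (j : ℝ) → g j ≤ 1 / ((j : ℝ) - C) ^ 2)
    (n : ℕ) : ∑ j ∈ Finset.range n, g j ≤ (C + A + 1) / A ^ 2 + 2 / A := by
  set m : ℕ := ⌈C + A⌉₊ with hm
  have hmR : (m : ℝ) ≤ C + A + 1 := by
    have := Nat.ceil_lt_add_one (by linarith : (0:ℝ) ≤ C + A)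
    linarith
  have hmR' : C + A ≤ (m : ℝ) := Nat.le_ceil _
  -- extend the sum to range (m + n)
  have hsub : ∑ j ∈ Finset.range n, g j ≤ ∑ j ∈ Finset.range (m + n), g j := by
    apply Finset.sum_le_sum_of_subset_of_nonneg
    · exact Finset.range_subset_range.2 (Nat.le_add_left n m)
    · intro i _ _; exact hg0 i
  refine hsub.trans ?_
  rw [Finset.range_eq_Ico, ← Finset.sum_Ico_consecutive g (Nat.zero_le m) (Nat.le_add_right m n)]
  have hApos : 0 < A := by linarith
  have hbound1 : ∑ j ∈ Finset.Ico 0 m, g j ≤ (C + A + 1) / A ^ 2 := by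
    calc ∑ j ∈ Finset.Ico 0 m, g j ≤ ∑ _j ∈ Finset.Ico 0 m, (1 / A ^ 2) :=
          Finset.sum_le_sum fun j _ => h1 j
      _ = m * (1 / A ^ 2) := by simp [mul_comm]
      _ ≤ (C + A + 1) * (1 / A ^ 2) := by
          apply mul_le_mul_of_nonneg_right hmR; positivity
      _ = (C + A + 1) / A ^ 2 := by ring
  have hbound2 : ∑ j ∈ Finset.Ico m (m + n), g j ≤ 2 / A := by
    rw [Finset.sum_Ico_eq_sum_range]
    simp only [add_tsub_cancel_left]
    have key : ∀ k : ℕ, g (m + k) ≤ 2 * (1 / (A + k) - 1 / (A + k + 1)) := by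
      intro k
      have hk1 : C + A ≤ ((m + k : ℕ) : ℝ) := by
        push_cast; linarith [Nat.cast_nonneg (α := ℝ) k]
      have h3 := h2 (m + k) hk1
      have hmk : A + k ≤ ((m + k : ℕ) : ℝ) - C := by push_cast; linarith
      have hAk : (0:ℝ) < A + k := by positivity
      calc g (m + k) ≤ 1 / (((m + k : ℕ) : ℝ) - C) ^ 2 := h3
        _ ≤ 1 / (A + k) ^ 2 := by
            apply one_div_le_one_div_of_le (by positivity)
            nlinarith
        _ ≤ 2 * (1 / (A + k) - 1 / (A + k + 1)) := by
            have e : 2 * (1 / (A + (k:ℝ)) - 1 / (A + k + 1)) = 2 / ((A + k) * (A + k + 1)) := by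
              field_simp
              ring
            rw [e, div_le_div_iff₀ (by positivity) (by positivity)]
            nlinarith
    calc ∑ k ∈ Finset.range n, g (m + k)
        ≤ ∑ k ∈ Finset.range n, 2 * (1 / (A + k) - 1 / (A + k + 1)) :=
          Finset.sum_le_sum fun k _ => key k
      _ = 2 * (1 / A - 1 / (A + n)) := by
          rw [← Finset.mul_sum]
          congr 1
          have : ∀ k : ℕ, 1 / (A + k) - 1 / (A + k + 1)
              = (fun i : ℕ => 1 / (A + i)) k - (fun i : ℕ => 1 / (A + i)) (k + 1) := by
            intro k; simp; ring_nf
          simp_rw [this]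
          rw [Finset.sum_range_sub' (fun i : ℕ => 1 / (A + i)) n]
          simp
      _ ≤ 2 / A := by
          have : 0 ≤ 1 / (A + n) := by positivity
          have h4 : 1/A ≤ 1/A := le_refl _
          rw [div_eq_mul_one_div 2 A]
          nlinarith
  linarith

lemma gammaSeq_ratio (a1 a2 b1 b2 : ℂ) (hsum : a1 + a2 = b1 + b2)
    (ha1 : ∀ j : ℕ, a1 + j ≠ 0) (ha2 : ∀ j : ℕ, a2 + j ≠ 0) (n : ℕ) (hn : n ≠ 0) :
    Complex.GammaSeq a1 n * Complex.GammaSeq a2 n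
      / (Complex.GammaSeq b1 n * Complex.GammaSeq b2 n)
      = ∏ j ∈ Finset.range (n + 1), ((b1 + j) * (b2 + j) / ((a1 + j) * (a2 + j))) := by
  have hnC : (n : ℂ) ≠ 0 := Nat.cast_ne_zero.mpr hn
  have hfact : ((n.factorial : ℂ)) ≠ 0 := Nat.cast_ne_zero.mpr n.factorial_ne_zero
  have hPa1 : (∏ j ∈ Finset.range (n + 1), (a1 + j)) ≠ 0 :=
    Finset.prod_ne_zero_iff.2 fun j _ => ha1 j
  have hPa2 : (∏ j ∈ Finset.range (n + 1), (a2 + j)) ≠ 0 :=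
    Finset.prod_ne_zero_iff.2 fun j _ => ha2 j
  have hpb1 : (n : ℂ) ^ b1 ≠ 0 := by
    rw [Ne, Complex.cpow_eq_zero_iff]; tauto
  have hpb2 : (n : ℂ) ^ b2 ≠ 0 := by
    rw [Ne, Complex.cpow_eq_zero_iff]; tauto
  have hpow : (n : ℂ) ^ a1 * (n : ℂ) ^ a2 = (n : ℂ) ^ b1 * (n : ℂ) ^ b2 := by
    rw [← Complex.cpow_add _ _ hnC, ← Complex.cpow_add _ _ hnC, hsum]
  rw [Finset.prod_div_distrib, Finset.prod_mul_distrib, Finset.prod_mul_distrib]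
  simp only [Complex.GammaSeq]
  rw [div_mul_div_comm, div_mul_div_comm]
  have hX : (n:ℂ) ^ a1 * ↑n.factorial * (↑n ^ a2 * ↑n.factorial)
      = ↑n ^ b1 * ↑n.factorial * (↑n ^ b2 * ↑n.factorial) := by
    linear_combination (↑n.factorial * ↑n.factorial : ℂ) * hpow
  have hX2 : (n:ℂ) ^ b1 * ↑n.factorial * (↑n ^ b2 * ↑n.factorial) ≠ 0 := by
    exact mul_ne_zero (mul_ne_zero hpb1 hfact) (mul_ne_zero hpb2 hfact)
  rw [hX, div_div_div_comm, div_self hX2, one_div_div]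
set_option maxHeartbeats 1000000 in
lemma G_bound (ν σ : ℝ) (hnu0 : 0 < ν) (hnu1 : ν < 1) {ε : ℝ} (hε : 0 < ε) :
    ∃ T : ℝ, ∀ t : ℝ, T ≤ |t| →
      ‖Complex.Gamma ((((σ:ℂ) + t * I) - ν) / 2) * Complex.Gamma ((((σ:ℂ) + t * I) + 1) / 2)
        / (Complex.Gamma (((σ:ℂ) + t * I) / 2)
            * Complex.Gamma ((((σ:ℂ) + t * I) + 1 - ν) / 2)) - 1‖ ≤ ε := by
  set C : ℝ := |σ| / 2 + 1 with hCdef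
  have hC0 : 0 ≤ C := by positivity
  set δ : ℝ := min 1 (ε / 3) with hδdef
  have hδ0 : 0 < δ := lt_min one_pos (by linarith)
  have hδ1 : δ ≤ 1 := min_le_left _ _
  have hδε : 3 * δ ≤ ε := by
    have := min_le_right 1 (ε / 3); nlinarith [hδ0]
  refine ⟨2 * ((C + 4) / δ) + 2, fun t ht => ?_⟩
  set A : ℝ := |t| / 2 with hAdef
  have hCδ : 0 < (C + 4) / δ := by positivity
  have hA1 : 1 ≤ A := by rw [hAdef]; nlinarith
  have hAδ : (C + 4) / A ≤ δ := by
    rw [div_le_iff₀ (by linarith)]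
    have h2 : (C + 4) / δ ≤ A := by rw [hAdef]; nlinarith
    calc C + 4 = ((C + 4) / δ) * δ := by field_simp
      _ ≤ A * δ := by apply mul_le_mul_of_nonneg_right h2 hδ0.le
      _ = δ * A := by ring
  have ht0 : t ≠ 0 := by
    intro h; rw [h] at ht; simp at ht; nlinarith
  -- complex setup
  set s : ℂ := (σ:ℂ) + t * I with hsdef
  set b1 : ℂ := s / 2 with hb1
  set b2 : ℂ := (s + 1 - ν) / 2 with hb2
  set a1 : ℂ := (s - ν) / 2 with ha1
  set a2 : ℂ := (s + 1) / 2 with ha2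
  have him_b1 : ∀ j : ℕ, (b1 + j).im = t / 2 := by
    intro j; simp [hb1, hsdef]
  have him_b2 : ∀ j : ℕ, (b2 + j).im = t / 2 := by
    intro j; simp [hb2, hsdef]
  have him_a1 : ∀ j : ℕ, (a1 + j).im = t / 2 := by
    intro j; simp [ha1, hsdef]
  have him_a2 : ∀ j : ℕ, (a2 + j).im = t / 2 := by
    intro j; simp [ha2, hsdef]
  have hre_b1 : ∀ j : ℕ, (b1 + j).re = σ / 2 + j := by
    intro j; simp [hb1, hsdef]
  have hre_b2 : ∀ j : ℕ, (b2 + j).re = (σ + 1 - ν) / 2 + j := by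
    intro j; simp [hb2, hsdef]; try ring
  have ht2 : t / 2 ≠ 0 := by simpa using ht0
  have hA_le_b1 : ∀ j : ℕ, A ≤ ‖b1 + j‖ := by
    intro j
    calc A = |t / 2| := by rw [hAdef, abs_div]; simp
      _ = |(b1 + j).im| := by rw [him_b1]
      _ ≤ ‖b1 + j‖ := Complex.abs_im_le_norm _
  have hA_le_b2 : ∀ j : ℕ, A ≤ ‖b2 + j‖ := by
    intro j
    calc A = |t / 2| := by rw [hAdef, abs_div]; simp
      _ = |(b2 + j).im| := by rw [him_b2]
      _ ≤ ‖b2 + j‖ := Complex.abs_im_le_norm _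
  -- the factors
  set u : ℕ → ℂ := fun j => (ν / 4 : ℂ) / ((b1 + j) * (b2 + j) - ν / 4) with hu
  have hden : ∀ j : ℕ, (b1 + j) * (b2 + j) - (ν / 4 : ℂ) = (a1 + j) * (a2 + j) := by
    intro j; rw [hb1, hb2, ha1, ha2]; ring
  have hane : ∀ j : ℕ, (a1 + j) * (a2 + j) ≠ 0 := by
    intro j
    apply mul_ne_zero <;> intro h
    · have := him_a1 j; rw [h] at this; simp at this; exact ht2 this.symm
    · have := him_a2 j; rw [h] at this; simp at this; exact ht2 this.symm
  have hdne : ∀ j : ℕ, (b1 + j) * (b2 + j) - (ν / 4 : ℂ) ≠ 0 := by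
    intro j; rw [hden]; exact hane j
  -- norm bound on u j
  have hP1 : ∀ j : ℕ, (1:ℝ) ≤ ‖(b1 + j) * (b2 + j)‖ := by
    intro j
    rw [norm_mul]
    calc (1:ℝ) = 1 * 1 := by ring
      _ ≤ A * A := by apply mul_le_mul hA1 hA1 zero_le_one (by linarith)
      _ ≤ ‖b1 + j‖ * ‖b2 + j‖ := by
          apply mul_le_mul (hA_le_b1 j) (hA_le_b2 j) (by linarith) (norm_nonneg _)
  have hu_le : ∀ j : ℕ, ‖u j‖ ≤ 1 / ‖(b1 + j) * (b2 + j)‖ := by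
    intro j
    rw [hu]
    have h1 : ‖(ν / 4 : ℂ)‖ = ν / 4 := by
      rw [show (ν / 4 : ℂ) = ((ν / 4 : ℝ) : ℂ) by push_cast; ring, Complex.norm_real,
        Real.norm_eq_abs, abs_of_pos (by linarith)]
    have h2 : ‖(b1 + j) * (b2 + j)‖ - ν / 4 ≤ ‖(b1 + j) * (b2 + j) - (ν / 4 : ℂ)‖ := by
      calc ‖(b1 + j) * (b2 + j)‖ - ν / 4
          = ‖(b1 + j) * (b2 + j)‖ - ‖(ν / 4 : ℂ)‖ := by rw [h1]
        _ ≤ ‖(b1 + j) * (b2 + j) - (ν / 4 : ℂ)‖ := norm_sub_norm_le _ _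
    have h3 : (3/4 : ℝ) * ‖(b1 + j) * (b2 + j)‖ ≤ ‖(b1 + j) * (b2 + j) - (ν / 4 : ℂ)‖ := by
      have := hP1 j; nlinarith
    rw [norm_div, h1]
    rw [div_le_div_iff₀ (by nlinarith [hP1 j, norm_nonneg ((b1 + j) * (b2 + j) - (ν / 4 : ℂ))])
      (by nlinarith [hP1 j])]
    nlinarith [hP1 j]
  -- hypotheses of sum_est
  have hg1 : ∀ j : ℕ, ‖u j‖ ≤ 1 / A ^ 2 := by
    intro j
    refine (hu_le j).trans ?_
    apply one_div_le_one_div_of_le (by positivity)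
    rw [norm_mul, sq]
    apply mul_le_mul (hA_le_b1 j) (hA_le_b2 j) (by linarith) (norm_nonneg _)
  have hg2 : ∀ j : ℕ, C + A ≤ (j : ℝ) → ‖u j‖ ≤ 1 / ((j : ℝ) - C) ^ 2 := by
    intro j hj
    have hjC : A ≤ (j : ℝ) - C := by linarith
    have hjC0 : 0 < (j : ℝ) - C := by linarith
    refine (hu_le j).trans ?_
    apply one_div_le_one_div_of_le (by positivity)
    rw [norm_mul, sq]
    have hr1 : (j : ℝ) - C ≤ ‖b1 + j‖ := by
      calc (j : ℝ) - C ≤ σ / 2 + j := by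
            rw [hCdef]; have := abs_nonneg σ; have := neg_abs_le σ; linarith
        _ ≤ |(b1 + j).re| := by rw [hre_b1]; exact le_abs_self _
        _ ≤ ‖b1 + j‖ := Complex.abs_re_le_norm _
    have hr2 : (j : ℝ) - C ≤ ‖b2 + j‖ := by
      calc (j : ℝ) - C ≤ (σ + 1 - ν) / 2 + j := by
            rw [hCdef]; have := neg_abs_le σ; linarith
        _ ≤ |(b2 + j).re| := by rw [hre_b2]; exact le_abs_self _
        _ ≤ ‖b2 + j‖ := Complex.abs_re_le_norm _
    exact mul_le_mul hr1 hr2 hjC0.le (norm_nonneg _)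
  have hsum_le : ∀ n : ℕ, ∑ j ∈ Finset.range n, ‖u j‖ ≤ δ := by
    intro n
    have := sum_est C A hC0 hA1 (fun j => ‖u j‖) (fun j => norm_nonneg _) hg1 hg2 n
    refine this.trans ?_
    have e1 : (C + A + 1) / A ^ 2 + 2 / A ≤ (C + 4) / A := by
      rw [div_add_div _ _ (by positivity) (by nlinarith), div_le_div_iff₀ (by positivity) (by nlinarith)]
      have key : 0 ≤ (C + 1) * (A - 1) * A ^ 2 :=
        mul_nonneg (mul_nonneg (by linarith) (by linarith)) (sq_nonneg A)
      nlinarith [key]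
    linarith [hAδ]
  -- product bound
  have hprod_bound : ∀ n : ℕ, ‖(∏ j ∈ Finset.range n, (1 + u j)) - 1‖ ≤ ε := by
    intro n
    refine (prod_one_add_sub_one_norm u n).trans ?_
    have h1 : Real.exp (∑ j ∈ Finset.range n, ‖u j‖) ≤ Real.exp δ :=
      Real.exp_le_exp.2 (hsum_le n)
    have h2 : Real.exp δ - 1 ≤ δ * Real.exp δ := by
      have hexp := Real.add_one_le_exp (-δ)
      have h3 : Real.exp (-δ) * Real.exp δ = 1 := by
        rw [← Real.exp_add]; simp
      have h4 : (1 - δ) * Real.exp δ ≤ 1 := by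
        calc (1 - δ) * Real.exp δ ≤ Real.exp (-δ) * Real.exp δ :=
              mul_le_mul_of_nonneg_right (by linarith) (Real.exp_pos δ).le
          _ = 1 := h3
      nlinarith [h4]
    have h5 : Real.exp δ ≤ 3 := by
      have := Real.exp_le_exp.2 hδ1
      have := Real.exp_one_lt_d9
      linarith
    have h6 : δ * Real.exp δ ≤ 3 * δ := by nlinarith [hδ0]
    linarith
  -- limits via GammaSeq
  have hb1im : b1.im ≠ 0 := by
    have := him_b1 0; push_cast at this; simp at this
    rw [show b1 = b1 + (0:ℕ) by simp]; rw [him_b1 0]; exact ht2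
  have hb2im : (b2).im ≠ 0 := by
    rw [show b2 = b2 + (0:ℕ) by simp]; rw [him_b2 0]; exact ht2
  have hbne : Complex.Gamma b1 * Complex.Gamma b2 ≠ 0 :=
    mul_ne_zero (my_Gamma_ne_zero hb1im) (my_Gamma_ne_zero hb2im)
  have htend : Tendsto (fun n => Complex.GammaSeq a1 n * Complex.GammaSeq a2 n
      / (Complex.GammaSeq b1 n * Complex.GammaSeq b2 n)) atTop
      (nhds (Complex.Gamma a1 * Complex.Gamma a2 / (Complex.Gamma b1 * Complex.Gamma b2))) :=
    ((Complex.GammaSeq_tendsto_Gamma a1).mul (Complex.GammaSeq_tendsto_Gamma a2)).div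
      ((Complex.GammaSeq_tendsto_Gamma b1).mul (Complex.GammaSeq_tendsto_Gamma b2)) hbne
  have ha1ne : ∀ j : ℕ, a1 + j ≠ 0 := by
    intro j h
    have := him_a1 j; rw [h] at this; simp at this; exact ht2 this.symm
  have ha2ne : ∀ j : ℕ, a2 + j ≠ 0 := by
    intro j h
    have := him_a2 j; rw [h] at this; simp at this; exact ht2 this.symm
  have hsum' : a1 + a2 = b1 + b2 := by rw [ha1, ha2, hb1, hb2]; ring
  have heq : ∀ᶠ n in atTop, Complex.GammaSeq a1 n * Complex.GammaSeq a2 n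
      / (Complex.GammaSeq b1 n * Complex.GammaSeq b2 n)
      = ∏ j ∈ Finset.range (n + 1), (1 + u j) := by
    filter_upwards [eventually_ge_atTop 1] with n hn
    rw [gammaSeq_ratio a1 a2 b1 b2 hsum' ha1ne ha2ne n (by omega)]
    refine Finset.prod_congr rfl fun j _ => ?_
    have e : 1 + u j = ((b1 + j) * (b2 + j)) / ((a1 + j) * (a2 + j)) := by
      rw [hu]; simp only []; rw [← hden j]
      have h4 : (b1 + (j:ℂ)) * (b2 + (j:ℂ)) * 4 - (ν:ℂ) ≠ 0 := by
        intro h; apply hdne j; linear_combination h / 4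
      rw [eq_div_iff (hdne j), add_mul, div_mul_cancel₀ _ (hdne j)]; ring
      try rw [eq_div_iff h4]
      try ring
    rw [e]
  have htend2 : Tendsto (fun n => ∏ j ∈ Finset.range (n + 1), (1 + u j)) atTop
      (nhds (Complex.Gamma a1 * Complex.Gamma a2
        / (Complex.Gamma b1 * Complex.Gamma b2))) := htend.congr' heq
  exact le_of_tendsto ((htend2.sub tendsto_const_nhds).norm)
    (Eventually.of_forall fun n => hprod_bound (n + 1))
-- the basic trigonometric identity
lemma cot_identity (w : ℂ) :
    Complex.cos w * (Complex.exp (w * I) ^ 2 - 1)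
      = I * Complex.sin w * (Complex.exp (w * I) ^ 2 + 1) := by
  have hxy : Complex.exp (w * I) * Complex.exp (-(w * I)) = 1 := by
    rw [← Complex.exp_add]; simp
  rw [Complex.cos, Complex.sin]
  set x := Complex.exp (w * I)
  set y := Complex.exp (-(w * I))
  have hy : Complex.exp (-w * I) = y := by rw [show -w * I = -(w * I) by ring]
  rw [hy]
  linear_combination x * hxy + ((x ^ 3 + x - x ^ 2 * y - y) / 2) * Complex.I_sq
lemma cot_identity' (w : ℂ) :
    Complex.cos w * (1 - Complex.exp (-(w * I)) ^ 2)
      = I * Complex.sin w * (1 + Complex.exp (-(w * I)) ^ 2) := by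
  have hxy : Complex.exp (w * I) * Complex.exp (-(w * I)) = 1 := by
    rw [← Complex.exp_add]; simp
  rw [Complex.cos, Complex.sin]
  set x := Complex.exp (w * I)
  set y := Complex.exp (-(w * I))
  have hy : Complex.exp (-w * I) = y := by rw [show -w * I = -(w * I) by ring]
  rw [hy]
  linear_combination (-y) * hxy + ((x + x * y ^ 2 - y - y ^ 3) / 2) * Complex.I_sq

lemma cot_tendsto_atTop (σ : ℝ) :
    Tendsto (fun t : ℝ => Complex.cos ((π : ℂ) * ((σ : ℂ) + t * I) / 2)
      / Complex.sin ((π : ℂ) * ((σ : ℂ) + t * I) / 2)) atTop (nhds (-I)) := by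
  set w : ℝ → ℂ := fun t => (π : ℂ) * ((σ : ℂ) + t * I) / 2 with hw
  set q : ℝ → ℂ := fun t => Complex.exp (w t * I) ^ 2 with hq
  have hqnorm : ∀ t : ℝ, ‖q t‖ = Real.exp (-(π * t)) := by
    intro t
    rw [hq]
    simp only [norm_pow, Complex.norm_exp]
    rw [← Real.exp_nat_mul]
    congr 1
    have : (w t * I).re = -(π * t) / 2 := by
      simp [hw]; ring
    rw [this]; ring
  have hq0 : Tendsto q atTop (nhds 0) := by
    rw [tendsto_zero_iff_norm_tendsto_zero]
    have : Tendsto (fun t : ℝ => -(π * t)) atTop atBot := by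
      apply tendsto_neg_atBot_iff.2
      exact Tendsto.const_mul_atTop Real.pi_pos tendsto_id
    exact (Real.tendsto_exp_atBot.comp this).congr fun t => (hqnorm t).symm
  have hlim : Tendsto (fun t : ℝ => I * (q t + 1) / (q t - 1)) atTop (nhds (-I)) := by
    have h1 : Tendsto (fun t : ℝ => I * (q t + 1)) atTop (nhds (I * (0 + 1))) :=
      tendsto_const_nhds.mul (hq0.add tendsto_const_nhds)
    have h2 : Tendsto (fun t : ℝ => q t - 1) atTop (nhds (0 - 1)) :=
      hq0.sub tendsto_const_nhds
    rw [show (-I : ℂ) = I * (0 + 1) / (0 - 1) by rw [eq_div_iff (by norm_num : (0:ℂ) - 1 ≠ 0)]; ring]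
    exact h1.div h2 (by norm_num)
  refine hlim.congr' ?_
  filter_upwards [eventually_gt_atTop 0] with t ht
  have him : (w t).im = π * t / 2 := by simp [hw]; try ring
  have hsin : Complex.sin (w t) ≠ 0 := by
    apply my_sin_ne_zero; rw [him]; positivity
  have hq1 : q t - 1 ≠ 0 := by
    intro h
    have : ‖q t‖ = 1 := by
      rw [sub_eq_zero] at h; rw [h]; simp
    rw [hqnorm t] at this
    have := (Real.exp_eq_one_iff _).1 this
    nlinarith [Real.pi_pos]
  show I * (q t + 1) / (q t - 1) = Complex.cos (w t) / Complex.sin (w t)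
  rw [div_eq_div_iff hq1 hsin]
  simp only [hq]
  linear_combination -cot_identity (w t)

lemma cot_tendsto_atBot (σ : ℝ) :
    Tendsto (fun t : ℝ => Complex.cos ((π : ℂ) * ((σ : ℂ) + t * I) / 2)
      / Complex.sin ((π : ℂ) * ((σ : ℂ) + t * I) / 2)) atBot (nhds I) := by
  set w : ℝ → ℂ := fun t => (π : ℂ) * ((σ : ℂ) + t * I) / 2 with hw
  set r : ℝ → ℂ := fun t => Complex.exp (-(w t * I)) ^ 2 with hr
  have hrnorm : ∀ t : ℝ, ‖r t‖ = Real.exp (π * t) := by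
    intro t
    rw [hr]
    simp only [norm_pow, Complex.norm_exp]
    rw [← Real.exp_nat_mul]
    congr 1
    have : (-(w t * I)).re = π * t / 2 := by
      simp [hw]; try ring
    rw [this]; ring
  have hr0 : Tendsto r atBot (nhds 0) := by
    rw [tendsto_zero_iff_norm_tendsto_zero]
    have : Tendsto (fun t : ℝ => π * t) atBot atBot := by
      exact Tendsto.const_mul_atBot Real.pi_pos tendsto_id
    exact (Real.tendsto_exp_atBot.comp this).congr fun t => (hrnorm t).symm
  have hlim : Tendsto (fun t : ℝ => I * (1 + r t) / (1 - r t)) atBot (nhds I) := by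
    have h1 : Tendsto (fun t : ℝ => I * (1 + r t)) atBot (nhds (I * (1 + 0))) :=
      tendsto_const_nhds.mul (tendsto_const_nhds.add hr0)
    have h2 : Tendsto (fun t : ℝ => 1 - r t) atBot (nhds (1 - 0)) :=
      tendsto_const_nhds.sub hr0
    have h3 := h1.div h2 (by norm_num)
    have h4 : I * ((1:ℂ) + 0) / (1 - 0) = I := by norm_num
    rw [h4] at h3
    exact h3
  refine hlim.congr' ?_
  filter_upwards [eventually_lt_atBot 0] with t ht
  have him : (w t).im = π * t / 2 := by simp [hw]; try ring
  have hsin : Complex.sin (w t) ≠ 0 := by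
    apply my_sin_ne_zero; rw [him]
    intro h; nlinarith [Real.pi_pos]
  have hr1 : (1 : ℂ) - r t ≠ 0 := by
    intro h
    have : ‖r t‖ = 1 := by
      rw [sub_eq_zero] at h; rw [← h]; simp
    rw [hrnorm t] at this
    have := (Real.exp_eq_one_iff _).1 this
    nlinarith [Real.pi_pos]
  show I * (1 + r t) / (1 - r t) = Complex.cos (w t) / Complex.sin (w t)
  rw [div_eq_div_iff hr1 hsin]
  simp only [hr]
  linear_combination -cot_identity' (w t)

lemma rat_tendsto_atTop (σ : ℝ) :
    Tendsto (fun t : ℝ => 2 * ((σ : ℂ) + t * I) / (1 - ((σ : ℂ) + t * I))) atTop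
      (nhds (-2)) := by
  have htail : Tendsto (fun t : ℝ => (2 : ℂ) / (1 - ((σ : ℂ) + t * I))) atTop (nhds 0) := by
    apply squeeze_zero_norm' (a := fun t : ℝ => 2 * t⁻¹)
    · filter_upwards [eventually_ge_atTop 1] with t ht
      have h1 : t ≤ ‖(1 : ℂ) - ((σ : ℂ) + t * I)‖ := by
        calc t = |((1 : ℂ) - ((σ : ℂ) + t * I)).im| := by
              simp; rw [abs_of_pos]; linarith
          _ ≤ ‖(1 : ℂ) - ((σ : ℂ) + t * I)‖ := Complex.abs_im_le_norm _
      rw [norm_div]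
      simp only [Complex.norm_ofNat]
      rw [← div_eq_mul_inv]
      apply div_le_div_of_nonneg_left (by norm_num) (by linarith) h1
    · simpa using tendsto_inv_atTop_zero.const_mul (2:ℝ)
  have heq : ∀ᶠ t : ℝ in atTop, 2 * ((σ : ℂ) + t * I) / (1 - ((σ : ℂ) + t * I))
      = -2 + 2 / (1 - ((σ : ℂ) + t * I)) := by
    filter_upwards [eventually_gt_atTop 0] with t ht
    have hne : (1 : ℂ) - ((σ : ℂ) + t * I) ≠ 0 := by
      intro h
      have : ((1 : ℂ) - ((σ : ℂ) + t * I)).im = 0 := by rw [h]; simp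
      simp at this; nlinarith
    field_simp
    ring
  have := (tendsto_const_nhds (x := (-2 : ℂ)) (f := atTop)).add htail
  rw [add_zero] at this
  exact this.congr' (heq.mono fun t h => h.symm)

lemma rat_tendsto_atBot (σ : ℝ) :
    Tendsto (fun t : ℝ => 2 * ((σ : ℂ) + t * I) / (1 - ((σ : ℂ) + t * I))) atBot
      (nhds (-2)) := by
  have htail : Tendsto (fun t : ℝ => (2 : ℂ) / (1 - ((σ : ℂ) + t * I))) atBot (nhds 0) := by
    apply squeeze_zero_norm' (a := fun t : ℝ => 2 * (-t)⁻¹)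
    · filter_upwards [eventually_le_atBot (-1 : ℝ)] with t ht
      have h1 : -t ≤ ‖(1 : ℂ) - ((σ : ℂ) + t * I)‖ := by
        calc -t = |((1 : ℂ) - ((σ : ℂ) + t * I)).im| := by
              have h5 : ((1 : ℂ) - ((σ : ℂ) + t * I)).im = -t := by simp
              rw [h5, abs_of_pos (by linarith : (0:ℝ) < -t)]
          _ ≤ ‖(1 : ℂ) - ((σ : ℂ) + t * I)‖ := Complex.abs_im_le_norm _
      rw [norm_div]
      simp only [Complex.norm_ofNat]
      rw [← div_eq_mul_inv]
      apply div_le_div_of_nonneg_left (by norm_num) (by linarith) h1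
    · have h2 : Tendsto (fun t : ℝ => -t) atBot atTop := tendsto_neg_atBot_atTop
      simpa [Function.comp_def] using (tendsto_inv_atTop_zero.const_mul (2:ℝ)).comp h2
  have heq : ∀ᶠ t : ℝ in atBot, 2 * ((σ : ℂ) + t * I) / (1 - ((σ : ℂ) + t * I))
      = -2 + 2 / (1 - ((σ : ℂ) + t * I)) := by
    filter_upwards [eventually_lt_atBot (0 : ℝ)] with t ht
    have hne : (1 : ℂ) - ((σ : ℂ) + t * I) ≠ 0 := by
      intro h
      have : ((1 : ℂ) - ((σ : ℂ) + t * I)).im = 0 := by rw [h]; simp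
      simp at this; nlinarith
    field_simp
    ring
  have := (tendsto_const_nhds (x := (-2 : ℂ)) (f := atBot)).add htail
  rw [add_zero] at this
  exact this.congr' (heq.mono fun t h => h.symm)

lemma key_eq (ν : ℝ) (s : ℂ) (hs : s.im ≠ 0) :
    s * (Complex.Gamma (1 - s / 2) * Complex.Gamma ((s - (ν:ℂ)) / 2) /
      (Complex.Gamma ((s + 1 - (ν:ℂ)) / 2) * Complex.Gamma ((3 - s) / 2)))
    = (2 * s / (1 - s)) * (Complex.cos ((π:ℂ) * s / 2) / Complex.sin ((π:ℂ) * s / 2)) *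
      (Complex.Gamma ((s - (ν:ℂ)) / 2) * Complex.Gamma ((s + 1) / 2) /
        (Complex.Gamma (s / 2) * Complex.Gamma ((s + 1 - (ν:ℂ)) / 2))) := by
  have him2 : ∀ z : ℂ, (z / 2).im = z.im / 2 := fun z => by
    rw [show (2:ℂ) = ((2:ℝ):ℂ) by norm_num, Complex.div_ofReal_im]
  have hπ : (π : ℂ) ≠ 0 := Complex.ofReal_ne_zero.2 Real.pi_ne_zero
  have hΓ1 : Complex.Gamma (s / 2) ≠ 0 := by
    apply my_Gamma_ne_zero; rw [him2]; simpa using hs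
  have hΓ2 : Complex.Gamma ((s + 1) / 2) ≠ 0 := by
    apply my_Gamma_ne_zero; rw [him2]; simpa using hs
  have hΓ3 : Complex.Gamma ((s + 1 - (ν:ℂ)) / 2) ≠ 0 := by
    apply my_Gamma_ne_zero; rw [him2]; simp [Complex.sub_im, Complex.add_im]
    simpa using hs
  have h1s2 : ((1 - s) / 2 : ℂ) ≠ 0 := by
    intro h
    have : ((1 - s) / 2).im = 0 := by rw [h]; simp
    rw [him2] at this; simp at this; exact hs this
  have hΓ4 : Complex.Gamma ((1 - s) / 2) ≠ 0 := by
    apply my_Gamma_ne_zero; rw [him2]; simp; simpa using hs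
  have hsinim : ((π:ℂ) * s / 2).im ≠ 0 := by
    have h5 : ((π:ℂ) * s).im = π * s.im := by simp [Complex.mul_im]
    rw [him2, h5]
    exact div_ne_zero (mul_ne_zero Real.pi_ne_zero hs) two_ne_zero
  have hsin : Complex.sin ((π:ℂ) * s / 2) ≠ 0 := my_sin_ne_zero hsinim
  have hcos : Complex.cos ((π:ℂ) * s / 2) ≠ 0 := my_cos_ne_zero hsinim
  have h1s : (1 : ℂ) - s ≠ 0 := by
    intro h
    have : ((1:ℂ) - s).im = 0 := by rw [h]; simp
    simp at this; exact hs this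
  -- Gamma recurrence
  have hG3 : Complex.Gamma ((3 - s) / 2) = ((1 - s) / 2) * Complex.Gamma ((1 - s) / 2) := by
    rw [show (3 - s) / 2 = (1 - s) / 2 + 1 by ring, Complex.Gamma_add_one _ h1s2]
  -- reflection formulas
  have hr1 : Complex.Gamma (1 - s / 2)
      = (π:ℂ) / (Complex.sin ((π:ℂ) * s / 2) * Complex.Gamma (s / 2)) := by
    have h := Complex.Gamma_mul_Gamma_one_sub (s / 2)
    rw [show (π:ℂ) * (s / 2) = (π:ℂ) * s / 2 by ring] at h
    rw [eq_div_iff (mul_ne_zero hsin hΓ1)]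
    rw [eq_div_iff hsin] at h
    linear_combination h
  have hr2 : Complex.Gamma ((1 - s) / 2)
      = (π:ℂ) / (Complex.cos ((π:ℂ) * s / 2) * Complex.Gamma ((s + 1) / 2)) := by
    have h := Complex.Gamma_mul_Gamma_one_sub ((s + 1) / 2)
    rw [show (1:ℂ) - (s + 1) / 2 = (1 - s) / 2 by ring] at h
    rw [show (π:ℂ) * ((s + 1) / 2) = (π:ℂ) * s / 2 + (π:ℂ) / 2 by push_cast; ring,
      Complex.sin_add_pi_div_two] at h
    rw [eq_div_iff (mul_ne_zero hcos hΓ2)]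
    rw [eq_div_iff hcos] at h
    linear_combination h
  rw [hG3, hr1, hr2]
  field_simp


end Aux


theorem gamma_ratio_asymptotics (nu : ℝ) (hnu0 : 0 < nu) (hnu1 : nu < 1) (σ : ℝ) :
    Tendsto (fun t : ℝ => ((σ : ℂ) + (t : ℂ) * Complex.I)
        * Rfun nu ((σ : ℂ) + (t : ℂ) * Complex.I)) atTop (nhds (2 * Complex.I)) ∧
    Tendsto (fun t : ℝ => ((σ : ℂ) + (t : ℂ) * Complex.I)
        * Rfun nu ((σ : ℂ) + (t : ℂ) * Complex.I)) atBot (nhds (-(2 * Complex.I))) := by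
  have hG_top : Tendsto (fun t : ℝ =>
      Complex.Gamma ((((σ:ℂ) + t * I) - nu) / 2) * Complex.Gamma ((((σ:ℂ) + t * I) + 1) / 2)
        / (Complex.Gamma (((σ:ℂ) + t * I) / 2)
            * Complex.Gamma ((((σ:ℂ) + t * I) + 1 - nu) / 2))) atTop (nhds 1) := by
    rw [Metric.tendsto_atTop]
    intro ε hε
    obtain ⟨T, hT⟩ := G_bound nu σ hnu0 hnu1 (half_pos hε)
    refine ⟨|T| + 1, fun t ht => ?_⟩
    have habs : T ≤ |t| := by
      have h1 := le_abs_self T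
      have h2 : (0:ℝ) ≤ |T| := abs_nonneg T
      rw [abs_of_pos (by linarith)]
      linarith
    have h3 := hT t habs
    rw [Complex.dist_eq]
    calc ‖_‖ ≤ ε / 2 := h3
      _ < ε := by linarith
  have hG_bot : Tendsto (fun t : ℝ =>
      Complex.Gamma ((((σ:ℂ) + t * I) - nu) / 2) * Complex.Gamma ((((σ:ℂ) + t * I) + 1) / 2)
        / (Complex.Gamma (((σ:ℂ) + t * I) / 2)
            * Complex.Gamma ((((σ:ℂ) + t * I) + 1 - nu) / 2))) atBot (nhds 1) := by
    rw [Metric.tendsto_nhds]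
    intro ε hε
    obtain ⟨T, hT⟩ := G_bound nu σ hnu0 hnu1 (half_pos hε)
    filter_upwards [eventually_le_atBot (-(|T| + 1))] with t ht
    have habs : T ≤ |t| := by
      have h1 := le_abs_self T
      have h2 : (0:ℝ) ≤ |T| := abs_nonneg T
      rw [abs_of_neg (by linarith)]
      linarith
    have h3 := hT t habs
    rw [Complex.dist_eq]
    calc ‖_‖ ≤ ε / 2 := h3
      _ < ε := by linarith
  constructor
  · have hcomb := ((rat_tendsto_atTop σ).mul (cot_tendsto_atTop σ)).mul hG_top
    rw [show (-2 : ℂ) * (-I) * 1 = 2 * I by ring] at hcomb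
    refine Tendsto.congr' ?_ hcomb
    filter_upwards [eventually_ge_atTop (1:ℝ)] with t ht
    have him : ((σ:ℂ) + t * I).im = t := by simp
    have := (key_eq nu ((σ:ℂ) + t * I) (by rw [him]; intro h; linarith)).symm
    simpa only [Rfun] using this
  · have hcomb := ((rat_tendsto_atBot σ).mul (cot_tendsto_atBot σ)).mul hG_bot
    rw [show (-2 : ℂ) * I * 1 = -(2 * I) by ring] at hcomb
    refine Tendsto.congr' ?_ hcomb
    filter_upwards [eventually_le_atBot (-1:ℝ)] with t ht
    have him : ((σ:ℂ) + t * I).im = t := by simp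
    have := (key_eq nu ((σ:ℂ) + t * I) (by rw [him]; intro h; linarith)).symm
    simpa only [Rfun] using this
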